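/- arXiv:1409.3637 — 6 statements merged into one kernel-verified Lean document; each statement's English description precedes it below -/
import Mathlib

section
/- Let T ⊆ S and U be sets of morphisms in a category C, with T right cofinal in S. If S is right permutative with respect to U and U∘T ⊆ U (every composite of a morphism of T followed by a morphism of U belongs to U), then T is also right permutative with respect to U. -/
open CategoryTheory

universe v v' u u'

variable {C : Type u} [Category.{v} C]

/-- `S` is right permutative with respect to `T`. -/
def RightPermutative (S T : MorphismProperty C) : Prop :=
  ∀ ⦃x y z : C⦄ (a : x ⟶ z) (b : y ⟶ z), S a → T b →
    ∃ (u : C) (a' : u ⟶ y) (b' : u ⟶ x), S a' ∧ T b' ∧ b' ≫ a = a' ≫ b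

/-- `S` is right reversible with respect to `T`. -/
def RightReversible (S T : MorphismProperty C) : Prop :=
  ∀ ⦃x y : C⦄ (a a' : x ⟶ y), T a → T a' →
    (∃ (z : C) (b : y ⟶ z), S b ∧ a ≫ b = a' ≫ b) →
    ∃ (u : C) (c : u ⟶ x), S c ∧ c ≫ a = c ≫ a'

/-- `S` is a multiplicative set: contains identities and is closed under composition. -/
def IsMultiplicativeSet (S : MorphismProperty C) : Prop :=
  (∀ x : C, S (𝟙 x)) ∧ ∀ ⦃x y z : C⦄ (f : x ⟶ y) (g : y ⟶ z), S f → S g → S (f ≫ g)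

/-- `S` is strictly multiplicative: contains all isomorphisms and is closed under composition. -/
def IsStrictlyMultiplicativeSet (S : MorphismProperty C) : Prop :=
  (∀ ⦃x y : C⦄ (f : x ⟶ y), IsIso f → S f) ∧
    ∀ ⦃x y z : C⦄ (f : x ⟶ y) (g : y ⟶ z), S f → S g → S (f ≫ g)

/-- `S` is saturated: two-out-of-three for composites. -/
def IsSaturatedSet (S : MorphismProperty C) : Prop :=
  ∀ ⦃x y z : C⦄ (f : x ⟶ y) (g : y ⟶ z),
    (S f → S g → S (f ≫ g)) ∧ (S f → S (f ≫ g) → S g) ∧ (S g → S (f ≫ g) → S f)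

/-- `T` is right cofinal in `S`. -/
def RightCofinal (T S : MorphismProperty C) : Prop :=
  (∀ ⦃x y : C⦄ (f : x ⟶ y), T f → S f) ∧
    ∀ ⦃x y : C⦄ (f : x ⟶ y), S f → ∃ (z : C) (g : z ⟶ x), T g ∧ T (g ≫ f)

/-- If `T` is right cofinal in `S`, `S` is right permutative with respect to `U` and
`U ∘ T ⊆ U`, then `T` is right permutative with respect to `U`. -/
theorem rightPermutative_of_rightCofinal (S T U : MorphismProperty C)
    (hTS : RightCofinal T S)
    (hSU : RightPermutative S U)
    (hUT : ∀ ⦃x y z : C⦄ (t : x ⟶ y) (u : y ⟶ z), T t → U u → U (t ≫ u)) :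
    RightPermutative T U := by
  intro x y z a b ha hb
  obtain ⟨u, a', b', ha', hb', hsq⟩ := hSU a b (hTS.1 a ha) hb
  obtain ⟨w, g, hg, hga'⟩ := hTS.2 a' ha'
  exact ⟨w, g ≫ a', g ≫ b', hga', hUT g b' hg hb', by simp only [Category.assoc, hsq]⟩
end

section
/- Let T ⊆ S and U be sets of morphisms in a category C, with T right cofinal in S. If S is right reversible with respect to U, then T is also right reversible with respect to U. -/
open CategoryTheory

universe v v' u u'

variable {C : Type u} [Category.{v} C]

/-- If `T` is right cofinal in `S` and `S` is right reversible with respect to `U`,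
then `T` is right reversible with respect to `U`. -/
theorem rightReversible_of_rightCofinal (S T U : MorphismProperty C)
    (hTS : RightCofinal T S)
    (hSU : RightReversible S U) :
    RightReversible T U := by
  rintro x y a a' ha ha' ⟨z, b, hb, hab⟩
  obtain ⟨u, c, hc, hcaa'⟩ := hSU a a' ha ha' ⟨z, b, hTS.1 b hb, hab⟩
  obtain ⟨w, g, -, hgc⟩ := hTS.2 c hc
  exact ⟨w, g ≫ c, hgc, by rw [Category.assoc, hcaa', Category.assoc]⟩
end

section
/- Let T ⊆ S and U be sets of morphisms in a category C, with T right cofinal in S. If T is right permutative with respect to U and T∘U ⊆ U, then S is right permutative with respect to U. -/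
open CategoryTheory

universe v v' u u'

variable {C : Type u} [Category.{v} C]

/-- If `T` is right cofinal in `S`, `T` is right permutative with respect to `U` and
`T ∘ U ⊆ U`, then `S` is right permutative with respect to `U`. -/
theorem rightPermutative_of_rightCofinal_sub (S T U : MorphismProperty C)
    (hTS : RightCofinal T S)
    (hTU : RightPermutative T U)
    (hUT : ∀ ⦃x y z : C⦄ (u : x ⟶ y) (t : y ⟶ z), U u → T t → U (u ≫ t)) :
    RightPermutative S U := by
  intro x y z a b ha hb
  -- replace `a ∈ S` by `g ≫ a ∈ T`, complete the square in `T`, then absorb `g` into the `U`-side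
  obtain ⟨w, g, hg, hga⟩ := hTS.2 a ha
  obtain ⟨u, a', b', ha', hb', comm⟩ := hTU (g ≫ a) b hga hb
  exact ⟨u, a', b' ≫ g, hTS.1 a' ha', hUT b' g hb' hg, (Category.assoc b' g a).trans comm⟩
end

section
/- Let C be a small category, S a saturated right localizing set of morphisms in C, and T ⊆ S a multiplicative set that is right cofinal in S. Regard S and T as (non-full) subcategories of C with the same objects. Then for every object x of S, the comma category j/x of the inclusion j : T → S over x (objects: pairs (y, a) with a : y → x in S and y an object; morphisms (y,a) → (z,b): morphisms α : y → z in T with b∘α = a) is nonempty and cofiltered, i.e. (a) any two objects admit a common source, and (b) any parallel pair of morphisms is equalized by some morphism into their common domain. -/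
open CategoryTheory

universe v v' u u'

variable {C : Type u} [Category.{v} C]

/-!
For a common source of `a` and `b`, complete the cospan to an Ore square `α' ≫ a = β' ≫ b`
with `β' ∈ S`; saturation puts `α'` in `S`, and cofinality, applied twice, precomposes both legs
into `T` at once. A parallel pair `α, β` over `x` satisfies `α ≫ b = β ≫ b` with `b ∈ S`, so
reversibility equalizes it by an arrow of `S`, which cofinality again replaces by one of `T`.
-/

namespace RightCofinal

variable {S T : MorphismProperty C}

theorem exists_comp_mem_of_pair (h : RightCofinal T S) (hSmult : IsMultiplicativeSet S)
    (hTmult : IsMultiplicativeSet T) {y z₁ z₂ : C} {f₁ : y ⟶ z₁} {f₂ : y ⟶ z₂}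
    (hf₁ : S f₁) (hf₂ : S f₂) :
    ∃ (w : C) (g : w ⟶ y), T (g ≫ f₁) ∧ T (g ≫ f₂) := by
  obtain ⟨_, g₁, hg₁, hg₁f₁⟩ := h.2 f₁ hf₁
  obtain ⟨w, g₂, hg₂, hg₂g₁f₂⟩ :=
    h.2 (g₁ ≫ f₂) (hSmult.2 g₁ f₂ (h.1 g₁ hg₁) hf₂)
  refine ⟨w, g₂ ≫ g₁, ?_, ?_⟩
  · simpa only [Category.assoc] using hTmult.2 g₂ (g₁ ≫ f₁) hg₂ hg₁f₁
  · simpa only [Category.assoc] using hg₂g₁f₂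

end RightCofinal

section Ore

variable {S T : MorphismProperty C}

theorem exists_common_source_of_rightCofinal (hSsat : IsSaturatedSet S)
    (hSmult : IsMultiplicativeSet S) (hSperm : RightPermutative S ⊤)
    (hTmult : IsMultiplicativeSet T) (hTS : RightCofinal T S)
    {x y z : C} {a : y ⟶ x} {b : z ⟶ x} (ha : S a) (hb : S b) :
    ∃ (w : C) (α : w ⟶ y) (β : w ⟶ z), T α ∧ T β ∧ α ≫ a = β ≫ b := by
  obtain ⟨_, β', α', hβ', -, hsq⟩ := hSperm a b ha trivial
  have hα' : S α' := (hSsat α' a).2.2 ha (hsq ▸ hSmult.2 β' b hβ' hb)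
  obtain ⟨w, g, hgα, hgβ⟩ := hTS.exists_comp_mem_of_pair hSmult hTmult hα' hβ'
  exact ⟨w, g ≫ α', g ≫ β', hgα, hgβ, by simp only [Category.assoc, hsq]⟩

theorem exists_equalizer_of_rightCofinal (hSrev : RightReversible S ⊤)
    (hTS : RightCofinal T S) {x y z : C} {b : z ⟶ x} (hb : S b) {α β : y ⟶ z}
    (h : α ≫ b = β ≫ b) :
    ∃ (w : C) (γ : w ⟶ y), T γ ∧ γ ≫ α = γ ≫ β := by
  obtain ⟨_, c, hc, hcαβ⟩ := hSrev α β trivial trivial ⟨x, b, hb, h⟩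
  obtain ⟨w, g, -, hgc⟩ := hTS.2 c hc
  exact ⟨w, g ≫ c, hgc, by simp only [Category.assoc, hcαβ]⟩

end Ore

/-- For a saturated right localizing set `S` and a multiplicative right cofinal subset `T ⊆ S`,
the comma category `j/x` of the inclusion `j : T → S` over any object `x` is nonempty and
cofiltered.  Objects of `j/x` are pairs `(y, a : y ⟶ x)` with `a ∈ S`; morphisms
`(y, a) ⟶ (z, b)` are morphisms `α : y ⟶ z` in `T` with `α ≫ b = a`. -/
theorem comma_nonempty_cofiltered {C : Type u} [SmallCategory C]
    (S T : MorphismProperty C)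
    (hSsat : IsSaturatedSet S)
    (hSmult : IsMultiplicativeSet S)
    (hSperm : RightPermutative S (⊤ : MorphismProperty C))
    (hSrev : RightReversible S (⊤ : MorphismProperty C))
    (hTmult : IsMultiplicativeSet T)
    (hTS : RightCofinal T S)
    (x : C) :
    -- the comma category `j/x` is nonempty
    (∃ (y : C) (a : y ⟶ x), S a) ∧
    -- (a) any two objects admit a common source
    (∀ ⦃y z : C⦄ (a : y ⟶ x) (b : z ⟶ x), S a → S b →
      ∃ (w : C) (c : w ⟶ x) (α : w ⟶ y) (β : w ⟶ z),
        S c ∧ T α ∧ T β ∧ α ≫ a = c ∧ β ≫ b = c) ∧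
    -- (b) any parallel pair of morphisms is equalized by some morphism into their common domain
    (∀ ⦃y z : C⦄ (a : y ⟶ x) (b : z ⟶ x), S a → S b →
      ∀ (α β : y ⟶ z), T α → T β → α ≫ b = a → β ≫ b = a →
        ∃ (w : C) (c : w ⟶ x) (γ : w ⟶ y),
          S c ∧ T γ ∧ γ ≫ a = c ∧ γ ≫ α = γ ≫ β) := by
  refine ⟨⟨x, 𝟙 x, hSmult.1 x⟩, ?common_source, ?equalizer⟩
  case common_source =>
    intro y z a b ha hb
    obtain ⟨w, α, β, hα, hβ, hsq⟩ :=
      exists_common_source_of_rightCofinal hSsat hSmult hSperm hTmult hTS ha hb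
    exact ⟨w, α ≫ a, α, β, hSmult.2 α a (hTS.1 α hα) ha, hα, hβ, rfl, hsq.symm⟩
  case equalizer =>
    intro y z a b ha hb α β _ _ hαb hβb
    obtain ⟨w, γ, hγ, hγαβ⟩ :=
      exists_equalizer_of_rightCofinal hSrev hTS hb (hαb.trans hβb.symm)
    exact ⟨w, γ ≫ a, γ, hSmult.2 γ a (hTS.1 γ hγ) ha, hγ, rfl, hγαβ⟩
end

section
/- Let φ : C → D be a full and essentially surjective functor, and let T ⊆ S be sets of morphisms in D with T right cofinal in S and T strictly multiplicative. Then φ⁻¹T is right cofinal in φ⁻¹S. -/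
open CategoryTheory

universe v v' u u'

variable {C : Type u} [Category.{v} C]

variable {D : Type u'} [Category.{v'} D]

/-- The pull-back `φ⁻¹S` of a set of morphisms `S` of `D` along a functor `φ : C ⥤ D`. -/
def preimageSet (φ : C ⥤ D) (S : MorphismProperty D) : MorphismProperty C :=
  fun _ _ f => S (φ.map f)

/-!
A witness `g : z ⟶ φ x` of cofinality in `D` need not lie in the image of `φ`, but its source is
isomorphic to some `φ z'`, and by fullness `e.hom ≫ g` lifts to `z' ⟶ x`. Since `T` contains the
isomorphisms and is closed under composition, precomposing with `e.hom` keeps both `g` and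
`g ≫ φ f` in `T`.
-/

theorem IsStrictlyMultiplicativeSet.iso_hom_comp {T : MorphismProperty C}
    (hT : IsStrictlyMultiplicativeSet T) {x y z : C} (e : x ≅ y) {f : y ⟶ z} (hf : T f) :
    T (e.hom ≫ f) :=
  hT.2 _ _ (hT.1 _ inferInstance) hf

theorem CategoryTheory.Functor.exists_map_eq_iso_hom_comp (φ : C ⥤ D) [φ.Full] [φ.EssSurj]
    {z : D} {x : C} (g : z ⟶ φ.obj x) :
    ∃ (z' : C) (e : φ.obj z' ≅ z) (g' : z' ⟶ x), φ.map g' = e.hom ≫ g :=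
  ⟨φ.objPreimage z, φ.objObjPreimageIso z, φ.preimage _, φ.map_preimage _⟩

theorem preimageSet_rightCofinal_general (φ : C ⥤ D) [φ.Full] [φ.EssSurj]
    (S T : MorphismProperty D)
    (hT : IsStrictlyMultiplicativeSet T)
    (hTS : RightCofinal T S) :
    RightCofinal (preimageSet φ T) (preimageSet φ S) := by
  refine ⟨fun _ _ f hf => hTS.1 _ hf, fun x y f hf => ?_⟩
  obtain ⟨z, g, hg, hgf⟩ := hTS.2 _ hf
  obtain ⟨z', e, g', hg'⟩ := φ.exists_map_eq_iso_hom_comp g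
  refine ⟨z', g', ?_, ?_⟩
  · show T (φ.map g')
    rw [hg']
    exact hT.iso_hom_comp e hg
  · show T (φ.map (g' ≫ f))
    rw [φ.map_comp, hg', Category.assoc]
    exact hT.iso_hom_comp e hgf

/-- If `φ` is full and essentially surjective and `T ⊆ S` with `T` right cofinal in `S` and
`T` strictly multiplicative, then `φ⁻¹T` is right cofinal in `φ⁻¹S`. -/
theorem preimageSet_rightCofinal (φ : C ⥤ D) [φ.Full] [φ.EssSurj]
    (S T : MorphismProperty D)
    (hTsub : ∀ ⦃x y : D⦄ (f : x ⟶ y), T f → S f)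
    (hT : IsStrictlyMultiplicativeSet T)
    (hTS : RightCofinal T S) :
    RightCofinal (preimageSet φ T) (preimageSet φ S) :=
  preimageSet_rightCofinal_general φ S T hT hTS
end

section
/- Let A be a commutative noetherian ring, S a multiplicative subset of A, and J a finite product of finite totally ordered sets (a finite poset). For any functors x, y : J → ModFG(A) (finitely generated A-modules), the canonical map S⁻¹Hom_{Fun(J, Mod A)}(x, y) → Hom_{Fun(J, Mod S⁻¹A)}(S⁻¹x, S⁻¹y) is an isomorphism of S⁻¹A-modules, where S⁻¹x denotes the diagram obtained by applying the localization functor − ⊗_A S⁻¹A objectwise. -/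
section Diagrams

variable (R : Type) [CommRing R] (J : Type) [PartialOrder J]

/-- A `J`-indexed diagram of `R`-modules (a functor from the poset `J` to `R`-modules). -/
structure Diagram where
  M : J → Type
  [acg : ∀ j, AddCommGroup (M j)]
  [mod : ∀ j, Module R (M j)]
  map : ∀ {j k : J}, j ≤ k → (M j →ₗ[R] M k)
  map_refl : ∀ j : J, map (le_refl j) = LinearMap.id
  map_trans : ∀ {i j k : J} (h : i ≤ j) (h' : j ≤ k),
    map (le_trans h h') = (map h').comp (map h)

attribute [instance] Diagram.acg Diagram.mod

variable {R J}

/-- A family of linear maps is a morphism of diagrams when it is natural. -/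
def IsDiagramHom (x y : Diagram R J) (f : ∀ j, x.M j →ₗ[R] y.M j) : Prop :=
  ∀ (j k : J) (h : j ≤ k), (y.map h).comp (f j) = (f k).comp (x.map h)

/-- Composition of families of linear maps. -/
def diagComp {x y z : Diagram R J} (g : ∀ j, y.M j →ₗ[R] z.M j)
    (f : ∀ j, x.M j →ₗ[R] y.M j) : ∀ j, x.M j →ₗ[R] z.M j :=
  fun j => (g j).comp (f j)

/-- The identity morphism of a diagram. -/
def diagId (x : Diagram R J) : ∀ j, x.M j →ₗ[R] x.M j := fun _ => LinearMap.id

end Diagrams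

section Localized

variable {A : Type} [CommRing A] (S : Submonoid A) {J : Type} [PartialOrder J]

/-- The localization of a linear map, as a map between localized modules. -/
noncomputable def locMap {M N : Type} [AddCommGroup M] [Module A M] [AddCommGroup N]
    [Module A N] (f : M →ₗ[A] N) : LocalizedModule S M →ₗ[A] LocalizedModule S N :=
  IsLocalizedModule.map S (LocalizedModule.mkLinearMap S M)
    (LocalizedModule.mkLinearMap S N) f

/-- The objectwise localization of a diagram of modules. -/
noncomputable def locDiagram (x : Diagram A J) : Diagram A J where
  M j := LocalizedModule S (x.M j)
  map h := locMap S (x.map h)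
  map_refl j := by
    show locMap S (x.map (le_refl j)) = LinearMap.id
    rw [x.map_refl j]
    exact IsLocalizedModule.map_id S _
  map_trans h h' := by
    show locMap S (x.map (le_trans h h')) = LinearMap.comp _ _
    rw [x.map_trans h h']
    exact IsLocalizedModule.map_comp' S _ _ _ _ _

/-- A morphism of diagrams is a weak isomorphism (belongs to `w = Isom_{S,C}`) when its
objectwise localization is an isomorphism, i.e. bijective in each component. -/
noncomputable def IsLocIso (x y : Diagram A J) (f : ∀ j, x.M j →ₗ[A] y.M j) : Prop :=
  ∀ j, Function.Bijective (locMap S (f j))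

end Localized

section Hom

variable {A : Type} [CommRing A] (S : Submonoid A) {J : Type} [PartialOrder J]

/-- The `A`-module of morphisms of diagrams from `x` to `y`. -/
def diagHomSub (x y : Diagram A J) : Submodule A (∀ j, x.M j →ₗ[A] y.M j) where
  carrier := {f | IsDiagramHom x y f}
  add_mem' := fun {a b} ha hb => by
    intro j k h
    simp only [Pi.add_apply, LinearMap.comp_add, LinearMap.add_comp, ha j k h, hb j k h]
  zero_mem' := by intro j k h; simp
  smul_mem' := fun c a ha => by
    intro j k h
    simp only [Pi.smul_apply, LinearMap.comp_smul, LinearMap.smul_comp, ha j k h]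

/-- The canonical map from morphisms of diagrams to morphisms of localized diagrams. -/
noncomputable def locHom (x y : Diagram A J) :
    (diagHomSub x y : Submodule A (∀ j, x.M j →ₗ[A] y.M j)) →ₗ[A]
      diagHomSub (locDiagram S x) (locDiagram S y) where
  toFun f := ⟨fun j => locMap S (f.1 j), by
    intro j k h
    show (locMap S (y.map h)).comp (locMap S (f.1 j)) =
      (locMap S (f.1 k)).comp (locMap S (x.map h))
    simp only [locMap]
    rw [← IsLocalizedModule.map_comp', ← IsLocalizedModule.map_comp']
    exact congrArg _ (f.2 j k h)⟩
  map_add' f g := Subtype.ext (funext fun j => by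
    show locMap S ((f.1 + g.1) j) = locMap S (f.1 j) + locMap S (g.1 j)
    simp [locMap])
  map_smul' c f := Subtype.ext (funext fun j => by
    show locMap S ((c • f.1) j) = c • locMap S (f.1 j)
    simp [locMap])

end Hom

/-!
`Hom(x, y)` is the kernel of the naturality defect
`∏ⱼ Hom(xⱼ, yⱼ) → ∏_{j ≤ k} Hom(xⱼ, yₖ)`, `f ↦ (y.map ∘ fⱼ - fₖ ∘ x.map)`, a map between finite
products when `J` is finite. Localization commutes with finite products, with `Hom` out of a
finitely presented module (every finitely generated module over a noetherian ring is one), and,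
being exact, with kernels; so it carries this kernel to the corresponding kernel for the
localized diagrams.
-/

namespace IsLocalizedModule

attribute [local instance] IsLocalizedModule.isScalarTower_module

theorem restrict_of_eq_ker {R : Type*} [CommRing R] (S : Submonoid R)
    {M N M' N' : Type*} [AddCommGroup M] [Module R M] [AddCommGroup N] [Module R N]
    [AddCommGroup M'] [Module R M'] [AddCommGroup N'] [Module R N']
    (F : M →ₗ[R] M') (ℓ : N →ₗ[R] N') [IsLocalizedModule S F] [IsLocalizedModule S ℓ]
    {g : M →ₗ[R] N} {g' : M' →ₗ[R] N'} (hcomm : g' ∘ₗ F = ℓ ∘ₗ g)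
    {P : Submodule R M} {P' : Submodule R M'} (hP : P = LinearMap.ker g)
    (hP' : P' = LinearMap.ker g') (hF : ∀ m ∈ P, F m ∈ P') :
    IsLocalizedModule S (F.restrict hF) := by
  have hmap : map S F ℓ g = g' := lift_unique S F (ℓ ∘ₗ g) _ g' hcomm
  subst hmap hP hP'
  let _ := IsLocalizedModule.module (A := Localization S) S F
  let _ := IsLocalizedModule.module (A := Localization S) S ℓ
  exact LinearMap.toKerLocalized_isLocalizedModule (Localization S) S F ℓ g

end IsLocalizedModule

section HomLocalization

variable {A : Type} [CommRing A] (S : Submonoid A)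

theorem locMap_comp {M N P : Type} [AddCommGroup M] [Module A M] [AddCommGroup N] [Module A N]
    [AddCommGroup P] [Module A P] (g : N →ₗ[A] P) (f : M →ₗ[A] N) :
    locMap S (g ∘ₗ f) = locMap S g ∘ₗ locMap S f :=
  IsLocalizedModule.map_comp' S _ _ _ f g

noncomputable def locMapPi {κ : Type} (M N : κ → Type) [∀ k, AddCommGroup (M k)]
    [∀ k, Module A (M k)] [∀ k, AddCommGroup (N k)] [∀ k, Module A (N k)] :
    (∀ k, M k →ₗ[A] N k) →ₗ[A] ∀ k, LocalizedModule S (M k) →ₗ[A] LocalizedModule S (N k) :=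
  LinearMap.pi fun k =>
    IsLocalizedModule.map S (LocalizedModule.mkLinearMap S (M k))
      (LocalizedModule.mkLinearMap S (N k)) ∘ₗ LinearMap.proj k

instance isLocalizedModule_locMapPi {κ : Type} [Finite κ] (M N : κ → Type)
    [∀ k, AddCommGroup (M k)] [∀ k, Module A (M k)] [∀ k, AddCommGroup (N k)]
    [∀ k, Module A (N k)] [∀ k, Module.FinitePresentation A (M k)] :
    IsLocalizedModule S (locMapPi S M N) :=
  IsLocalizedModule.pi S _

end HomLocalization

section Naturality

variable {A : Type} [CommRing A] {J : Type} [PartialOrder J]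

def naturalityDefect (x y : Diagram A J) :
    (∀ j, x.M j →ₗ[A] y.M j) →ₗ[A] ∀ p : {p : J × J // p.1 ≤ p.2}, x.M p.1.1 →ₗ[A] y.M p.1.2 where
  toFun f p := y.map p.2 ∘ₗ f p.1.1 - f p.1.2 ∘ₗ x.map p.2
  map_add' f g := funext fun p => by
    simp only [Pi.add_apply, LinearMap.comp_add, LinearMap.add_comp]
    abel
  map_smul' c f := funext fun p => by
    simp only [Pi.smul_apply, LinearMap.comp_smul, LinearMap.smul_comp, smul_sub,
      RingHom.id_apply]

theorem diagHomSub_eq_ker_naturalityDefect (x y : Diagram A J) :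
    diagHomSub x y = LinearMap.ker (naturalityDefect x y) := by
  ext f
  simp only [LinearMap.mem_ker, funext_iff, Subtype.forall, Prod.forall]
  exact forall₂_congr fun j k => forall_congr' fun h => sub_eq_zero.symm

variable (S : Submonoid A)

theorem naturalityDefect_comp_locMapPi (x y : Diagram A J) :
    naturalityDefect (locDiagram S x) (locDiagram S y) ∘ₗ locMapPi S x.M y.M =
      locMapPi S (fun p : {p : J × J // p.1 ≤ p.2} => x.M p.1.1) (fun p => y.M p.1.2) ∘ₗ
        naturalityDefect x y := by
  ext f p : 2
  change locMap S (y.map p.2) ∘ₗ locMap S (f p.1.1) - locMap S (f p.1.2) ∘ₗ locMap S (x.map p.2)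
    = locMap S (y.map p.2 ∘ₗ f p.1.1 - f p.1.2 ∘ₗ x.map p.2)
  rw [← locMap_comp, ← locMap_comp]
  exact (map_sub (IsLocalizedModule.map S _ _) _ _).symm

theorem isLocalizedModule_locHom [Finite J] (x y : Diagram A J)
    [∀ j, Module.FinitePresentation A (x.M j)] :
    IsLocalizedModule S (locHom S x y) :=
  IsLocalizedModule.restrict_of_eq_ker S (locMapPi S x.M y.M)
    (locMapPi S (fun p : {p : J × J // p.1 ≤ p.2} => x.M p.1.1) (fun p => y.M p.1.2))
    (naturalityDefect_comp_locMapPi S x y) (diagHomSub_eq_ker_naturalityDefect x y)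
    (diagHomSub_eq_ker_naturalityDefect _ _) fun f hf => (locHom S x y ⟨f, hf⟩).2

end Naturality

theorem isLocalizedModule_diagram_hom_general
    (A : Type) [CommRing A] [IsNoetherianRing A] (S : Submonoid A)
    (ι : Type) [Fintype ι] (I : ι → Type) [∀ i, Fintype (I i)] [∀ i, LinearOrder (I i)]
    (x y : Diagram A (∀ i, I i))
    [∀ j, Module.Finite A (x.M j)] :
    IsLocalizedModule S (locHom S x y) :=
  have := fun j => Module.finitePresentation_of_finite A (x.M j)
  isLocalizedModule_locHom S x y

/-- for finitely generated modules over a noetherian commutative ring,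
`Hom` of diagrams localizes: the canonical map exhibits the module of morphisms of the
localized diagrams as the localization of the module of morphisms. -/
theorem isLocalizedModule_diagram_hom
    (A : Type) [CommRing A] [IsNoetherianRing A] (S : Submonoid A)
    (ι : Type) [Fintype ι] (I : ι → Type) [∀ i, Fintype (I i)] [∀ i, LinearOrder (I i)]
    (x y : Diagram A (∀ i, I i))
    [∀ j, Module.Finite A (x.M j)] [∀ j, Module.Finite A (y.M j)] :
    IsLocalizedModule S (locHom S x y) :=
  isLocalizedModule_diagram_hom_general A S ι I x y
end
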